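/- For any sequence P of cuts and expansion trees, the dependency relation <_P is cyclic if and only if there is an expansion occurrence w in P with w <_P w; equivalently, no <_P-cycle consists of cut occurrences only. -/

import Mathlib

/-! Preamble: first-order NNF formulas, expansion trees, expansion proofs with cut,
    LK, LKE, and the cut-reduction relation, following
    "Expansion Trees with Cut". -/

/-- First-order terms. -/
inductive Term : Type where
  | var : ℕ → Term
  | func : ℕ → List Term → Term

namespace Term

/-- The list of variables occurring in a term. -/
def varList : Term → List ℕ
  | .var n => [n]
  | .func _ ts => ts.attach.flatMap fun t => varList t.1
decreasing_by
  have := List.sizeOf_lt_of_mem t.2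
  simp at *; omega

/-- Simultaneous substitution on terms. -/
def subst (σ : ℕ → Term) : Term → Term
  | .var n => σ n
  | .func f ts => .func f (ts.attach.map fun t => subst σ t.1)
decreasing_by
  have := List.sizeOf_lt_of_mem t.2
  simp at *; omega

/-- The variable at the head of a term (junk value `0` for non-variables). -/
def asVar : Term → ℕ
  | .var n => n
  | _ => 0

end Term

/-- The substitution replacing the single variable `x` by the term `t`. -/
def subst1 (x : ℕ) (t : Term) : ℕ → Term := fun n => if n = x then t else .var n

/-- First-order formulas in negation normal form. -/
inductive Formula : Type where
  | pos : ℕ → List Term → Formula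
  | neg : ℕ → List Term → Formula
  | and : Formula → Formula → Formula
  | or  : Formula → Formula → Formula
  | all : ℕ → Formula → Formula
  | ex  : ℕ → Formula → Formula

namespace Formula

/-- De Morgan dual. -/
def dual : Formula → Formula
  | pos p ts => neg p ts
  | neg p ts => pos p ts
  | and A B => or A.dual B.dual
  | or A B => and A.dual B.dual
  | all x A => ex x A.dual
  | ex x A => all x A.dual

/-- Simultaneous substitution on formulas (binders are kept). -/
def subst (σ : ℕ → Term) : Formula → Formula
  | pos p ts => pos p (ts.map (Term.subst σ))
  | neg p ts => neg p (ts.map (Term.subst σ))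
  | and A B => and (A.subst σ) (B.subst σ)
  | or A B => or (A.subst σ) (B.subst σ)
  | all x A => all x (A.subst σ)
  | ex x A => ex x (A.subst σ)

/-- All variables occurring in a formula (including binders). -/
def varList : Formula → List ℕ
  | pos _ ts => ts.flatMap Term.varList
  | neg _ ts => ts.flatMap Term.varList
  | and A B => A.varList ++ B.varList
  | or A B => A.varList ++ B.varList
  | all x A => x :: A.varList
  | ex x A => x :: A.varList

/-- Free variables of a formula. -/
def fvarList : Formula → List ℕ
  | pos _ ts => ts.flatMap Term.varList
  | neg _ ts => ts.flatMap Term.varList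
  | and A B => A.fvarList ++ B.fvarList
  | or A B => A.fvarList ++ B.fvarList
  | all x A => A.fvarList.filter (· ≠ x)
  | ex x A => A.fvarList.filter (· ≠ x)

/-- Bound variables of a formula. -/
def bvarList : Formula → List ℕ
  | pos _ _ => []
  | neg _ _ => []
  | and A B => A.bvarList ++ B.bvarList
  | or A B => A.bvarList ++ B.bvarList
  | all x A => x :: A.bvarList
  | ex x A => x :: A.bvarList

/-- A literal is an atom or a negated atom. -/
def isLit : Formula → Prop
  | pos _ _ => True
  | neg _ _ => True
  | _ => False

/-- A formula is positive if its top connective is ∨, ∃ or a positive literal. -/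
def Positive : Formula → Prop
  | pos _ _ => True
  | or _ _ => True
  | ex _ _ => True
  | _ => False

/-- Logical complexity of a formula. -/
def size : Formula → ℕ
  | pos _ _ => 0
  | neg _ _ => 0
  | and A B => A.size + B.size + 1
  | or A B => A.size + B.size + 1
  | all _ A => A.size + 1
  | ex _ A => A.size + 1

/-- Boolean evaluation of a (quantifier-free) formula under an assignment of
    truth values to atoms; the quantifier cases are junk. -/
def eval (v : ℕ → List Term → Bool) : Formula → Bool
  | pos p ts => v p ts
  | neg p ts => ! v p ts
  | and A B => A.eval v && B.eval v
  | or A B => A.eval v || B.eval v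
  | all _ A => A.eval v
  | ex _ A => A.eval v

end Formula

/-- A sequent of quantifier-free formulas is a (propositional) tautology. -/
def TautList (Γ : List Formula) : Prop := ∀ v, ∃ A ∈ Γ, A.eval v = true

/-- Expansion trees. -/
inductive ETree : Type where
  | lit : Formula → ETree
  | and : ETree → ETree → ETree
  | or  : ETree → ETree → ETree
  | ex  : ℕ → Formula → List (Term × ETree) → ETree
  | all : ℕ → Formula → ℕ → ETree → ETree

namespace ETree

/-- The shallow formula of an expansion tree. -/
def sh : ETree → Formula
  | lit L => L
  | and a b => .and a.sh b.sh
  | or a b => .or a.sh b.sh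
  | ex x A _ => .ex x A
  | all x A _ _ => .all x A

/-- Disjunction of a list of formulas (junk on the empty list). -/
def bigOr : List Formula → Formula
  | [] => Formula.pos 0 []
  | [A] => A
  | A :: B :: rest => .or A (bigOr (B :: rest))

/-- The deep formula of an expansion tree. -/
def dp : ETree → Formula
  | lit L => L
  | and a b => .and a.dp b.dp
  | or a b => .or a.dp b.dp
  | ex _ _ es => bigOr (es.attach.map fun e => dp e.1.2)
  | all _ _ _ E => E.dp
decreasing_by
  all_goals try (rcases e with ⟨⟨t1, E1⟩, hmem⟩; have := List.sizeOf_lt_of_mem hmem)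
  all_goals simp at *
  all_goals omega

/-- The eigenvariables of the ∀-expansions occurring in an expansion tree. -/
def eigenList : ETree → List ℕ
  | lit _ => []
  | and a b => a.eigenList ++ b.eigenList
  | or a b => a.eigenList ++ b.eigenList
  | ex _ _ es => es.attach.flatMap fun e => eigenList e.1.2
  | all _ _ α E => α :: E.eigenList
decreasing_by
  all_goals try (rcases e with ⟨⟨t1, E1⟩, hmem⟩; have := List.sizeOf_lt_of_mem hmem)
  all_goals simp at *
  all_goals omega

/-- All variables occurring in an expansion tree. -/
def varList : ETree → List ℕ
  | lit L => L.varList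
  | and a b => a.varList ++ b.varList
  | or a b => a.varList ++ b.varList
  | ex x A es => x :: A.varList ++ es.attach.flatMap (fun e => e.1.1.varList ++ varList e.1.2)
  | all x A α E => α :: x :: A.varList ++ E.varList
decreasing_by
  all_goals try (rcases e with ⟨⟨t1, E1⟩, hmem⟩; have := List.sizeOf_lt_of_mem hmem)
  all_goals simp at *
  all_goals omega

/-- Substitution applied to an expansion tree.  On a ∀-expansion the
    eigenvariable is replaced by the (head variable of the) image term. -/
def subst (σ : ℕ → Term) : ETree → ETree
  | lit L => lit (L.subst σ)
  | and a b => and (a.subst σ) (b.subst σ)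
  | or a b => or (a.subst σ) (b.subst σ)
  | ex x A es => ex x (A.subst σ) (es.attach.map fun e => (e.1.1.subst σ, subst σ e.1.2))
  | all x A α E => all x (A.subst σ) ((σ α).asVar) (subst σ E)
decreasing_by
  all_goals try (rcases e with ⟨⟨t1, E1⟩, hmem⟩; have := List.sizeOf_lt_of_mem hmem)
  all_goals simp at *
  all_goals omega

/-- Renaming of variables in an expansion tree. -/
def rename (η : ℕ → ℕ) (E : ETree) : ETree := E.subst fun n => Term.var (η n)

/-- `α` occurs as the eigenvariable of some ∀-expansion of the tree. -/
def hasEigen (α : ℕ) (E : ETree) : Prop := α ∈ E.eigenList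

end ETree

/-- Entries of a branch: formulas and integers. -/
inductive BEntry : Type where
  | fm : Formula → BEntry
  | num : ℕ → BEntry

/-- The branches of an expansion tree: all lists of formulas and branch choices
    encountered on a complete path from the root to a leaf. -/
def ETree.brList : ETree → List (List BEntry)
  | .lit L => [[.fm L]]
  | .and a b =>
      ((a.brList).map fun r => .fm (ETree.and a b).sh :: .num 1 :: r) ++
      ((b.brList).map fun r => .fm (ETree.and a b).sh :: .num 2 :: r)
  | .or a b =>
      ((a.brList).map fun r => .fm (ETree.or a b).sh :: .num 1 :: r) ++
      ((b.brList).map fun r => .fm (ETree.or a b).sh :: .num 2 :: r)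
  | .ex x A es => es.attach.flatMap fun e => (ETree.brList e.1.2).map fun r => .fm (Formula.ex x A) :: r
  | .all x A _ E => (E.brList).map fun r => .fm (Formula.all x A) :: r
decreasing_by
  all_goals try (rcases e with ⟨⟨t1, E1⟩, hmem⟩; have := List.sizeOf_lt_of_mem hmem)
  all_goals simp at *
  all_goals omega

/-- A substitution acts on a branch by acting on its formula entries. -/
def brSubst (σ : ℕ → Term) : List BEntry → List BEntry :=
  List.map fun e => match e with
    | .fm F => .fm (F.subst σ)
    | .num i => .num i

/-- The subtree relation on expansion trees. -/
inductive Subtree : ETree → ETree → Prop where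
  | refl (E : ETree) : Subtree E E
  | and_left {F a b} : Subtree F a → Subtree F (.and a b)
  | and_right {F a b} : Subtree F b → Subtree F (.and a b)
  | or_left {F a b} : Subtree F a → Subtree F (.or a b)
  | or_right {F a b} : Subtree F b → Subtree F (.or a b)
  | ex {F x A es} (e : Term × ETree) : e ∈ es → Subtree F e.2 → Subtree F (.ex x A es)
  | all {F x A α E} : Subtree F E → Subtree F (.all x A α E)

/-- Well-formedness of an expansion tree (Miller's conditions on shallow formulas). -/
inductive ETree.WF : ETree → Prop where
  | lit {L} : L.isLit → WF (.lit L)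
  | and {a b} : WF a → WF b → WF (.and a b)
  | or {a b} : WF a → WF b → WF (.or a b)
  | ex {x A es} : es ≠ [] → (∀ e ∈ es, WF e.2) →
      (∀ e ∈ es, ETree.sh e.2 = A.subst (subst1 x e.1)) → WF (.ex x A es)
  | all {x A α E} : WF E → E.sh = A.subst (subst1 x (.var α)) → WF (.all x A α E)

/-- An item of an expansion proof: an expansion tree or a cut (ordered pair,
    positive tree first). -/
abbrev EItem : Type := ETree ⊕ ETree × ETree

/-- Sequences of cuts and expansion trees. -/
abbrev EProof : Type := List EItem

namespace EItem

/-- The expansion trees of an item. -/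
def trees : EItem → List ETree
  | .inl E => [E]
  | .inr c => [c.1, c.2]

/-- Is the item a cut? -/
def isCut : EItem → Prop
  | .inl _ => False
  | .inr _ => True

/-- Well-formedness of an item: trees are well-formed; a cut is an ordered pair
    of dual well-formed trees, the positive one first. -/
def WF : EItem → Prop
  | .inl E => E.WF
  | .inr c => c.1.WF ∧ c.2.WF ∧ c.2.sh = c.1.sh.dual ∧ c.1.sh.Positive

/-- `α` occurs as eigenvariable of a ∀-expansion in the item. -/
def hasEigen (α : ℕ) (it : EItem) : Prop := ∃ E ∈ it.trees, α ∈ E.eigenList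

/-- Apply a function to all trees of an item. -/
def mapTrees (f : ETree → ETree) : EItem → EItem
  | .inl E => .inl (f E)
  | .inr c => .inr (f c.1, f c.2)

end EItem

/-- The shallow sequent of a sequence: the shallow formulas of its trees. -/
def shSeq (P : EProof) : List Formula :=
  P.filterMap fun it => match it with
    | .inl E => some E.sh
    | .inr _ => none

/-- The deep sequent of a sequence: deep formulas of trees and cuts. -/
def dpSeq (P : EProof) : List Formula :=
  P.map fun it => match it with
    | .inl E => E.dp
    | .inr c => .and c.1.dp c.2.dp

/-- The branches of an item (union over its trees). -/
def EItem.branches (it : EItem) : Set (List BEntry) :=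
  {s | ∃ E ∈ it.trees, s ∈ E.brList}

/-- Weak regularity: two branches exhibiting a ∀-expansion with the same
    eigenvariable have equal prefixes, equal ∀-formulas, and live in members of
    the same kind (both trees or both cuts). -/
def WeakRegular (P : EProof) : Prop :=
  ∀ S ∈ P, ∀ T ∈ P, ∀ (s s' r r' : List BEntry) (x y α : ℕ) (A B : Formula),
    (s ++ [BEntry.fm (.all x A), BEntry.fm (A.subst (subst1 x (.var α)))] ++ s') ∈ S.branches →
    (r ++ [BEntry.fm (.all y B), BEntry.fm (B.subst (subst1 y (.var α)))] ++ r') ∈ T.branches →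
    s = r ∧ Formula.all x A = Formula.all y B ∧ (S.isCut ↔ T.isCut)

/-- A position inside a sequence: index of the item, index of the component
    tree inside the item, and a path in that tree. -/
structure TPos : Type where
  item : ℕ
  comp : ℕ
  path : List ℕ

/-- The subtree of an expansion tree at a given path. -/
def ETree.atPath : ETree → List ℕ → Option ETree
  | E, [] => some E
  | .and a _, 0 :: p => a.atPath p
  | .and _ b, 1 :: p => b.atPath p
  | .or a _, 0 :: p => a.atPath p
  | .or _ b, 1 :: p => b.atPath p
  | .ex _ _ es, k :: p =>
      match es[k]? with
      | some e => e.2.atPath p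
      | none => none
  | .all _ _ _ E, 0 :: p => E.atPath p
  | _, _ => none

/-- The subtree of a sequence at a given position. -/
def treeAt (P : EProof) (q : TPos) : Option ETree :=
  match P[q.item]? with
  | some it =>
      match (EItem.trees it)[q.comp]? with
      | some E => E.atPath q.path
      | none => none
  | none => none

/-- Occurrences of expansions and cuts in a sequence. -/
inductive Occ : Type where
  | cut : ℕ → Occ
  | allO : TPos → Occ
  | exO : TPos → ℕ → Occ

/-- The occurrence is an expansion (not a cut). -/
def Occ.isExpansion : Occ → Prop
  | .cut _ => False
  | _ => True

/-- Position data of an expansion occurrence. -/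
def Occ.pos : Occ → Option TPos
  | .cut _ => none
  | .allO p => some p
  | .exO p _ => some p

/-- `i` is the index of a cut in `P`. -/
def IsCutIdx (P : EProof) (i : ℕ) : Prop := ∃ c : ETree × ETree, P[i]? = some (Sum.inr c)

/-- There is a ∀-expansion with eigenvariable `α` at position `q`. -/
def AllEigen (P : EProof) (q : TPos) (α : ℕ) : Prop :=
  ∃ x A E, treeAt P q = some (.all x A α E)

/-- Validity of an occurrence. -/
def ValidOcc (P : EProof) : Occ → Prop
  | .cut i => IsCutIdx P i
  | .allO q => ∃ x A α E, treeAt P q = some (.all x A α E)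
  | .exO q k => ∃ x A es, treeAt P q = some (.ex x A es) ∧ k < es.length

/-- The term of the `k`-th ∃-expansion at position `q` is `t`. -/
def ExTerm (P : EProof) (q : TPos) (k : ℕ) (t : Term) : Prop :=
  ∃ x A es e, treeAt P q = some (.ex x A es) ∧ es[k]? = some e ∧ e.1 = t

/-- The scope of an expansion occurrence: item, component and path prefix of
    everything it dominates. -/
def Occ.scope : Occ → Option (ℕ × ℕ × List ℕ)
  | .cut _ => none
  | .allO p => some (p.item, p.comp, p.path ++ [0])
  | .exO p k => some (p.item, p.comp, p.path ++ [k])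

/-- The expansion `v` dominates the expansion `w`. -/
def Dominates (P : EProof) (v w : Occ) : Prop :=
  ValidOcc P v ∧ ValidOcc P w ∧
    ∃ i c q pw r, v.scope = some (i, c, q) ∧ w.pos = some pw ∧
      pw.item = i ∧ pw.comp = c ∧ pw.path = q ++ r

/-- The immediate dependency relation `<⁰` between occurrences. -/
def Dep0 (P : EProof) (v w : Occ) : Prop :=
  ValidOcc P v ∧ ValidOcc P w ∧
    ((∃ p α, v = .allO p ∧ AllEigen P p α ∧
        ∃ q k t, w = .exO q k ∧ ExTerm P q k t ∧ α ∈ t.varList) ∨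
     Dominates P v w ∨
     (∃ i, v = .cut i ∧ ∃ q, w.pos = some q ∧ q.item = i) ∨
     (∃ p α i c, v = .allO p ∧ AllEigen P p α ∧ w = .cut i ∧
        P[i]? = some (Sum.inr c) ∧ α ∈ (c.1).sh.varList))

/-- The dependency relation `<_P`: the transitive closure of `<⁰`. -/
def Dep (P : EProof) : Occ → Occ → Prop := Relation.TransGen (Dep0 P)

/-- Acyclicity of the dependency relation. -/
def DepAcyclic (P : EProof) : Prop := ∀ o, ¬ Dep P o o

/-- The eigenvariable condition: no eigenvariable of a ∀-expansion of `P`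
    occurs in the shallow sequent of `P`. -/
def EigenCond (P : EProof) : Prop :=
  ∀ q α, AllEigen P q α → ∀ F ∈ shSeq P, α ∉ F.varList

/-- Expansion proofs: well-formed, weakly regular, acyclic, valid sequences of
    cuts and expansion trees satisfying the eigenvariable condition. -/
def IsExpansionProof (P : EProof) : Prop :=
  (∀ it ∈ P, EItem.WF it) ∧ WeakRegular P ∧ DepAcyclic P ∧
    TautList (dpSeq P) ∧ EigenCond P

/-- A sequence is cut-free if it contains no cuts. -/
def CutFreeSeq (P : EProof) : Prop := ∀ c : ETree × ETree, Sum.inr c ∉ P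

/-! ### The sequent calculus LK (sequents as multisets) -/

/-- The one-sided sequent calculus LK on multisets of NNF formulas. -/
inductive LK : Multiset Formula → Type where
  | ax (Γ : Multiset Formula) (p : ℕ) (ts : List Term) :
      LK (Formula.pos p ts ::ₘ Formula.neg p ts ::ₘ Γ)
  | andR {Γ : Multiset Formula} {A B : Formula} :
      LK (A ::ₘ Γ) → LK (B ::ₘ Γ) → LK (Formula.and A B ::ₘ Γ)
  | orR {Γ : Multiset Formula} {A B : Formula} :
      LK (A ::ₘ B ::ₘ Γ) → LK (Formula.or A B ::ₘ Γ)
  | allR {Γ : Multiset Formula} (x : ℕ) (A : Formula) (α : ℕ)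
      (hα : ∀ F ∈ Formula.all x A ::ₘ Γ, α ∉ Formula.varList F) :
      LK (A.subst (subst1 x (.var α)) ::ₘ Γ) → LK (Formula.all x A ::ₘ Γ)
  | exR {Γ : Multiset Formula} (x : ℕ) (A : Formula) (t : Term)
      (ht : ∀ v ∈ t.varList, v ∉ A.bvarList) :
      LK (A.subst (subst1 x t) ::ₘ Formula.ex x A ::ₘ Γ) → LK (Formula.ex x A ::ₘ Γ)
  | cut {Γ : Multiset Formula} (A : Formula) :
      LK (A ::ₘ Γ) → LK (A.dual ::ₘ Γ) → LK Γ

namespace LK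

/-- The eigenvariables of the ∀-inferences of an LK-proof. -/
def eigenList : {Γ : Multiset Formula} → LK Γ → List ℕ
  | _, .ax _ _ _ => []
  | _, .andR p q => p.eigenList ++ q.eigenList
  | _, .orR p => p.eigenList
  | _, .allR _ _ α _ p => α :: p.eigenList
  | _, .exR _ _ _ _ p => p.eigenList
  | _, .cut _ p q => p.eigenList ++ q.eigenList

/-- Cut-freeness of an LK-proof. -/
def cutFree : {Γ : Multiset Formula} → LK Γ → Prop
  | _, .ax _ _ _ => True
  | _, .andR p q => p.cutFree ∧ q.cutFree
  | _, .orR p => p.cutFree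
  | _, .allR _ _ _ _ p => p.cutFree
  | _, .exR _ _ _ _ p => p.cutFree
  | _, .cut _ _ _ => False

/-- Regularity: the eigenvariables of distinct ∀-inferences are pairwise
    distinct and different from the free variables of the conclusion. -/
def Regular {Γ : Multiset Formula} (π : LK Γ) : Prop :=
  π.eigenList.Nodup ∧ ∀ α ∈ π.eigenList, ∀ F ∈ Γ, α ∉ Formula.fvarList F

end LK

/-- The natural coercion of a formula into an expansion tree (∃-quantifiers are
    expanded with their own variable, ∀-quantifiers with an eigenvariable). -/
def Formula.toETree : Formula → ETree
  | .pos p ts => .lit (.pos p ts)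
  | .neg p ts => .lit (.neg p ts)
  | .and A B => .and A.toETree B.toETree
  | .or A B => .or A.toETree B.toETree
  | .ex x A => .ex x A [(.var x, A.toETree)]
  | .all x A => .all x A x A.toETree

/-- The translation `Exp` from LK-proofs to sequences of cuts and expansion
    trees (as a relation, since sequences are identified up to permutation). -/
inductive ExpOf : {Γ : Multiset Formula} → LK Γ → EProof → Prop where
  | ax (Γ : Multiset Formula) (p : ℕ) (ts : List Term) :
      ExpOf (LK.ax Γ p ts)
        ((Γ.toList.map fun F => Sum.inl F.toETree) ++
          [Sum.inl (.lit (.pos p ts)), Sum.inl (.lit (.neg p ts))])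
  | andR {Γ A B} {πA : LK (A ::ₘ Γ)} {πB : LK (B ::ₘ Γ)} {PA PB : EProof} {EA EB : ETree} :
      ExpOf πA (PA ++ [Sum.inl EA]) → EA.sh = A →
      ExpOf πB (PB ++ [Sum.inl EB]) → EB.sh = B →
      ExpOf (LK.andR πA πB) (PA ++ PB ++ [Sum.inl (.and EA EB)])
  | orR {Γ A B} {π : LK (A ::ₘ B ::ₘ Γ)} {P : EProof} {EA EB : ETree} :
      ExpOf π (P ++ [Sum.inl EA, Sum.inl EB]) → EA.sh = A → EB.sh = B →
      ExpOf (LK.orR π) (P ++ [Sum.inl (.or EA EB)])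
  | allR {Γ} {x : ℕ} {A : Formula} {α : ℕ} {hα}
      {π : LK (A.subst (subst1 x (.var α)) ::ₘ Γ)} {P : EProof} {E : ETree} :
      ExpOf π (P ++ [Sum.inl E]) → E.sh = A.subst (subst1 x (.var α)) →
      ExpOf (LK.allR x A α hα π) (P ++ [Sum.inl (.all x A α E)])
  | exR {Γ} {x : ℕ} {A : Formula} {t : Term} {ht}
      {π : LK (A.subst (subst1 x t) ::ₘ Formula.ex x A ::ₘ Γ)}
      {P : EProof} {es : List (Term × ETree)} {Et : ETree} :
      ExpOf π (P ++ [Sum.inl (.ex x A es), Sum.inl Et]) →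
      Et.sh = A.subst (subst1 x t) →
      ExpOf (LK.exR x A t ht π) (P ++ [Sum.inl (.ex x A (es ++ [(t, Et)]))])
  | cut {Γ} {A : Formula} (hA : A.Positive)
      {πp : LK (A ::ₘ Γ)} {πn : LK (A.dual ::ₘ Γ)}
      {Pp Pn : EProof} {Ep En : ETree} :
      ExpOf πp (Pp ++ [Sum.inl Ep]) → Ep.sh = A →
      ExpOf πn (Pn ++ [Sum.inl En]) → En.sh = A.dual →
      ExpOf (LK.cut A πp πn) (Sum.inr (Ep, En) :: (Pp ++ Pn))

/-! ### The calculus LKE on sequences of expansion trees and cuts -/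

/-- The calculus LKE, working on sequences of expansion trees and cuts
    (identified up to permutation). -/
inductive LKE : EProof → Prop where
  | ax (P : EProof) (p : ℕ) (ts : List Term) :
      LKE (P ++ [Sum.inl (.lit (.pos p ts)), Sum.inl (.lit (.neg p ts))])
  | allR (P : EProof) (x : ℕ) (A : Formula) (α : ℕ) (Es : List ETree)
      (hα : α ∉ (Formula.all x A).varList ∧ ∀ F ∈ shSeq P, α ∉ F.varList) :
      LKE (P ++ Es.map Sum.inl) →
      LKE (P ++ Es.map fun E => Sum.inl (.all x A α E))
  | exMove (P : EProof) (x : ℕ) (A : Formula)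
      (es₁ es₂ : List (Term × ETree)) (e : Term × ETree) :
      LKE (P ++ [Sum.inl (.ex x A (es₁ ++ es₂ ++ [e]))]) →
      LKE (P ++ [Sum.inl (.ex x A (es₁ ++ e :: es₂))])
  | exAbsorb (P : EProof) (x : ℕ) (A : Formula) (t : Term)
      (L : List (List (Term × ETree) × List ETree)) :
      LKE (P ++ L.map (fun q => Sum.inl (ETree.ex x A q.1)) ++
            (L.flatMap fun q => q.2.map Sum.inl)) →
      LKE (P ++ L.map fun q => Sum.inl (ETree.ex x A (q.1 ++ q.2.map fun E => (t, E))))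
  | andR (P : EProof) (E1 E2 : ETree) :
      LKE (P ++ [Sum.inl E1]) → LKE (P ++ [Sum.inl E2]) →
      LKE (P ++ [Sum.inl (.and E1 E2)])
  | orR (P : EProof) (E1 E2 : ETree) :
      LKE (P ++ [Sum.inl E1, Sum.inl E2]) → LKE (P ++ [Sum.inl (.or E1 E2)])
  | cut (P : EProof) (Es Fs : List ETree) (hlen : Es.length = Fs.length)
      (hsh : ∀ E ∈ Es, ∀ E' ∈ Es, ETree.sh E = ETree.sh E') :
      LKE (P ++ Es.map Sum.inl) → LKE (P ++ Fs.map Sum.inl) →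
      LKE (P ++ (Es.zip Fs).map fun c => Sum.inr c)
  | perm (P Q : EProof) : LKE P → P.Perm Q → LKE Q

/-! ### The sequent calculus LK on sequents-as-sets, with a cut flag -/

/-- The one-sided sequent calculus LK on sets of NNF formulas; the Boolean flag
    records whether the cut rule may be used. -/
inductive LKS : Bool → Set Formula → Prop where
  | ax (c : Bool) (Γ : Set Formula) (p : ℕ) (ts : List Term) :
      LKS c (insert (Formula.pos p ts) (insert (Formula.neg p ts) Γ))
  | andR {c : Bool} {Γ : Set Formula} {A B : Formula} :
      LKS c (insert A Γ) → LKS c (insert B Γ) → LKS c (insert (Formula.and A B) Γ)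
  | orR {c : Bool} {Γ : Set Formula} {A B : Formula} :
      LKS c (insert A (insert B Γ)) → LKS c (insert (Formula.or A B) Γ)
  | allR {c : Bool} {Γ : Set Formula} (x : ℕ) (A : Formula) (α : ℕ)
      (hα : ∀ F ∈ insert (Formula.all x A) Γ, α ∉ Formula.varList F) :
      LKS c (insert (A.subst (subst1 x (.var α))) Γ) →
      LKS c (insert (Formula.all x A) Γ)
  | exR {c : Bool} {Γ : Set Formula} (x : ℕ) (A : Formula) (t : Term)
      (ht : ∀ v ∈ t.varList, v ∉ A.bvarList) :
      LKS c (insert (A.subst (subst1 x t)) (insert (Formula.ex x A) Γ)) →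
      LKS c (insert (Formula.ex x A) Γ)
  | cut {Γ : Set Formula} (A : Formula) :
      LKS true (insert A Γ) → LKS true (insert A.dual Γ) → LKS true Γ

/-! ### Cut-reduction -/

/-- The substitution `[t/α₁,…,t/α_q]` of a quantifier reduction step. -/
def cutSubst (αs : List ℕ) (t : Term) : ℕ → Term :=
  fun n => if n ∈ αs then t else .var n

/-- All trees occurring in a sequence. -/
def EProof.allTrees (P : EProof) : List ETree := P.flatMap EItem.trees

/-- The quantifier-step redex determined by the data `x`, `A`,
    `cuts = [(es₁,α₁,F₁),…,(es_q,α_q,F_q)]` and the remainder `P`: the sequence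
    of cuts `{∃xA +^{es_j}, ∀x Ā +^{α_j} F_j}` followed by `P`. -/
def QuantRedex (x : ℕ) (A : Formula)
    (cuts : List (List (Term × ETree) × ℕ × ETree)) (P : EProof) : EProof :=
  (cuts.map fun c => Sum.inr (ETree.ex x A c.1, ETree.all x A.dual c.2.1 c.2.2)) ++ P

/-- The result of the quantifier reduction step: all cuts `{E_i, F_j η_i σ_i}`
    together with `P, Pη₁σ₁, …, Pη_lσ_l`. -/
def QuantResult (x : ℕ) (A : Formula)
    (cuts : List (List (Term × ETree) × ℕ × ETree)) (P : EProof)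
    (η : ℕ → ℕ → ℕ) : EProof :=
  let tes := cuts.flatMap fun c => c.1
  let αs := cuts.map fun c => c.2.1
  let Fs := cuts.map fun c => c.2.2
  (((List.range tes.length).zip tes).flatMap fun ie =>
      Fs.map fun F => Sum.inr (ie.2.2, (F.rename (η ie.1)).subst (cutSubst αs ie.2.1)))
    ++ P
    ++ (((List.range tes.length).zip tes).flatMap fun ie =>
          P.map (EItem.mapTrees fun G => (G.rename (η ie.1)).subst (cutSubst αs ie.2.1)))

/-- The eigenvariables `β` of the redex `P₁` lying above an occurrence of one of
    the `+^{α_i}` in the dependency order. -/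
def QuantDom (P₁ : EProof) (αs : List ℕ) : Set ℕ :=
  {β | ∃ αi ∈ αs, ∃ o o' : TPos,
     AllEigen P₁ o αi ∧ AllEigen P₁ o' β ∧ Dep P₁ (Occ.allO o) (Occ.allO o')}

/-- `η i` is, for each `i < l`, a renaming to fresh variables of the
    eigenvariables in `D`. -/
def FreshRenamings (P₁ : EProof) (D : Set ℕ) (l : ℕ) (η : ℕ → ℕ → ℕ) : Prop :=
  (∀ i β, β ∉ D → η i β = β) ∧
  (∀ i < l, ∀ β ∈ D, ∀ E ∈ P₁.allTrees, η i β ∉ E.varList) ∧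
  (∀ i < l, ∀ i' < l, ∀ β ∈ D, ∀ β' ∈ D, η i β = η i' β' → i = i' ∧ β = β')

/-- The basic cut-reduction steps (on sequences in a fixed order). -/
inductive Red0 : EProof → EProof → Prop where
  | atomic (p : ℕ) (ts : List Term) (P : EProof) :
      Red0 (Sum.inr (ETree.lit (.pos p ts), ETree.lit (.neg p ts)) :: P) P
  | prop (S : Formula) (Q : List (ETree × ETree × ETree × ETree)) (P : EProof)
      (hQ : Q ≠ [])
      (hsh : ∀ q ∈ Q, (ETree.or q.1 q.2.1).sh = S)
      (hP : ∀ c : ETree × ETree, Sum.inr c ∈ P → c.1.sh ≠ S) :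
      Red0 ((Q.map fun q => Sum.inr (ETree.or q.1 q.2.1, ETree.and q.2.2.1 q.2.2.2)) ++ P)
           ((Q.flatMap fun q => [Sum.inr (q.1, q.2.2.1), Sum.inr (q.2.1, q.2.2.2)]) ++ P)
  | quant (x : ℕ) (A : Formula)
      (cuts : List (List (Term × ETree) × ℕ × ETree)) (P : EProof) (η : ℕ → ℕ → ℕ)
      (hc : cuts ≠ []) (hne : ∀ c ∈ cuts, c.1 ≠ [])
      (hα : ∀ c ∈ cuts, ∀ it ∈ P, ¬ EItem.hasEigen c.2.1 it)
      (hPex : ∀ d : ETree × ETree, Sum.inr d ∈ P →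
        d.1.sh ≠ Formula.ex x A ∧ d.2.sh ≠ Formula.ex x A)
      (hη : FreshRenamings (QuantRedex x A cuts P)
              (QuantDom (QuantRedex x A cuts P) (cuts.map fun c => c.2.1))
              (cuts.flatMap fun c => c.1).length η) :
      Red0 (QuantRedex x A cuts P) (QuantResult x A cuts P η)

/-- The cut-reduction relation `↦` on sequences identified up to permutation. -/
def Red (P Q : EProof) : Prop :=
  ∃ P' Q', P.Perm P' ∧ Red0 P' Q' ∧ Q'.Perm Q

/-! ### Equivalence classes of cuts -/

/-- Two cuts are similar if they are quantified cuts with the same shallow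
    formula `∃x A`. -/
def CutSim : ETree × ETree → ETree × ETree → Prop := fun c d =>
  ∃ x A es α F es' α' F',
    c = (ETree.ex x A es, ETree.all x A.dual α F) ∧
    d = (ETree.ex x A es', ETree.all x A.dual α' F')

/-- The positions `i` and `j` carry cuts of `P` lying in the same
    ∼-equivalence class (the reflexive closure of `CutSim` on cut positions). -/
def SimIdx (P : EProof) (i j : ℕ) : Prop :=
  (i = j ∧ IsCutIdx P i) ∨
  (∃ c d, P[i]? = some (Sum.inr c) ∧ P[j]? = some (Sum.inr d) ∧ CutSim c d)

/-- The relation `≺` on ∼-equivalence classes of cuts, expressed on positions: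
    (class of `i`) ≺ (class of `j`) iff some member of the class of `i` is
    `<_P`-below every member of the class of `j`. -/
def ClassLt (P : EProof) (i j : ℕ) : Prop :=
  ∃ i', SimIdx P i' i ∧ ∀ j', SimIdx P j' j → Dep P (Occ.cut i') (Occ.cut j')

/-- The cut at position `i` has rank `r`. -/
def RkIdx (P : EProof) (i : ℕ) (r : ℕ) : Prop :=
  ∃ c : ETree × ETree, P[i]? = some (Sum.inr c) ∧ (c.1).sh.size = r

/-- The cut at position `i` is maximal: no cut has bigger rank, and no cut of
    the same rank is above it in the dependency order. -/
def MaximalCutIdx (P : EProof) (i : ℕ) : Prop :=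
  IsCutIdx P i ∧ ∀ j r r', RkIdx P i r → RkIdx P j r' →
    r' ≤ r ∧ (r' = r → ¬ Dep P (Occ.cut i) (Occ.cut j))

/-- A substitution may be applied to an expansion tree only if it maps each of
    its eigenvariables to a variable. -/
def SubstOK (σ : ℕ → Term) (E : ETree) : Prop :=
  ∀ α ∈ E.eigenList, ∃ n, σ α = Term.var n

theorem Relation.TransGen.exists_cycle_through {α : Type*} {r : α → α → Prop} {p : α → Prop}
    (hp : ∀ x y, r x y → ¬ p x → p y) {a : α} (h : Relation.TransGen r a a) :
    ∃ b, p b ∧ Relation.TransGen r b b := by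
  by_cases ha : p a
  · exact ⟨a, ha, h⟩
  · obtain ⟨b, hab, hba⟩ := Relation.TransGen.head'_iff.mp h
    exact ⟨b, hp a b hab ha, Relation.TransGen.tail' hba hab⟩

theorem Occ.isExpansion_of_pos_eq_some {o : Occ} {q : TPos} (h : o.pos = some q) :
    o.isExpansion := by
  cases o with
  | cut _ => simp [Occ.pos] at h
  | allO _ | exO _ _ => trivial

theorem Dep0.isExpansion_of_not_isExpansion {P : EProof} {v w : Occ} (h : Dep0 P v w)
    (hv : ¬ v.isExpansion) : w.isExpansion := by
  obtain ⟨-, -, hall | ⟨-, -, -, -, -, pw, -, -, hpw, -⟩ | ⟨-, -, q, hq, -⟩ | hcut⟩ := h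
  · obtain ⟨p, -, rfl, -⟩ := hall
    exact absurd trivial hv
  · exact Occ.isExpansion_of_pos_eq_some hpw
  · exact Occ.isExpansion_of_pos_eq_some hq
  · obtain ⟨p, -, -, -, rfl, -⟩ := hcut
    exact absurd trivial hv

/-- the dependency relation `<_P` is cyclic iff some
    expansion occurrence `w` satisfies `w <_P w`; equivalently, no
    `<_P`-cycle consists of cut occurrences only. -/
theorem dep_cycle_expansion (P : EProof) :
    (∃ o, Dep P o o) ↔ (∃ o, o.isExpansion ∧ Dep P o o) :=
  ⟨fun ⟨_, h⟩ => h.exists_cycle_through fun _ _ => Dep0.isExpansion_of_not_isExpansion,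
    fun ⟨o, _, h⟩ => ⟨o, h⟩⟩
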